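/- arXiv:2301.12226 — 2 statements merged into one kernel-verified Lean document; each statement's English description precedes it below -/
import Mathlib

section
/- Let K ≥ 1 be an integer and let (x_i)_{i=0}^K be a sequence of reals with x_0 = 0 satisfying the recursion x_{i+1} ≥ (1 - 1/K)·x_i + OPT/K - ε₁·ε₂ - i·ε₂/K for all 0 ≤ i < K, where OPT, ε₁, ε₂ ≥ 0. Then x_K ≥ (1 - (1 - 1/K)^K)·(OPT - K·ε₁·ε₂) - ε₂·∑_{i=0}^{K-1}(1 - 1/K)^{K-i-1}·(i/K). -/
/-!
Unrolling the linear recursion `x (i + 1) ≥ q * x i + c i` with `q = 1 - 1/K ≥ 0` gives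
`x K ≥ ∑ i < K, q ^ (K - i - 1) * c i`. The constant part of `c` contributes a geometric sum,
`∑ j < K, q ^ j = K * (1 - q ^ K)` because `1 - q = 1/K`; the part linear in `i` is the error sum.
-/

open Finset

theorem sum_range_succ_pow_sub_mul {R : Type*} [Semiring R] (q : R) (c : ℕ → R) (n : ℕ) :
    ∑ i ∈ range (n + 1), q ^ (n + 1 - i - 1) * c i
      = q * ∑ i ∈ range n, q ^ (n - i - 1) * c i + c n := by
  rw [sum_range_succ, mul_sum, show n + 1 - n - 1 = 0 by omega, pow_zero, one_mul]
  congr 1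
  refine sum_congr rfl fun i hi => ?_
  rw [show n + 1 - i - 1 = n - i - 1 + 1 by grind, pow_succ', mul_assoc]

theorem pow_mul_add_sum_le_of_mul_add_le_succ {R : Type*} [Semiring R] [PartialOrder R]
    [IsOrderedRing R] {q : R} (hq : 0 ≤ q) {x c : ℕ → R} {N : ℕ}
    (hrec : ∀ i < N, q * x i + c i ≤ x (i + 1)) :
    ∀ n ≤ N, q ^ n * x 0 + ∑ i ∈ range n, q ^ (n - i - 1) * c i ≤ x n := by
  intro n hn
  induction n with
  | zero => simp
  | succ n ih =>
    calc q ^ (n + 1) * x 0 + ∑ i ∈ range (n + 1), q ^ (n + 1 - i - 1) * c i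
        = q * (q ^ n * x 0 + ∑ i ∈ range n, q ^ (n - i - 1) * c i) + c n := by
          rw [sum_range_succ_pow_sub_mul, pow_succ', mul_add, mul_assoc, add_assoc]
      _ ≤ q * x n + c n := by gcongr; exact ih (by omega)
      _ ≤ x (n + 1) := hrec n hn

theorem geom_sum_one_sub_inv {K : ℕ} (hK : K ≠ 0) :
    ∑ j ∈ range K, (1 - 1 / (K : ℝ)) ^ j = K * (1 - (1 - 1 / (K : ℝ)) ^ K) := by
  rw [← mul_neg_geom_sum, sub_sub_cancel, ← mul_assoc, mul_one_div_cancel (by exact_mod_cast hK),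
    one_mul]

theorem sum_range_pow_reflect {R : Type*} [Semiring R] (q : R) (K : ℕ) :
    ∑ i ∈ range K, q ^ (K - i - 1) = ∑ j ∈ range K, q ^ j := by
  rw [← sum_range_reflect (q ^ ·) K]
  exact sum_congr rfl fun i _ => by rw [Nat.sub_right_comm]

theorem cauim_recursion_general (K : ℕ) (hK : 1 ≤ K) (x : ℕ → ℝ)
    (OPT ε₁ ε₂ : ℝ)
    (hx0 : x 0 = 0)
    (hrec : ∀ i < K, x (i + 1) ≥ (1 - 1 / (K : ℝ)) * x i + OPT / K - ε₁ * ε₂ - (i : ℝ) * ε₂ / K) :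
    x K ≥ (1 - (1 - 1 / (K : ℝ)) ^ K) * (OPT - (K : ℝ) * ε₁ * ε₂)
      - ε₂ * ∑ i ∈ Finset.range K, (1 - 1 / (K : ℝ)) ^ (K - i - 1) * ((i : ℝ) / K) := by
  set q : ℝ := 1 - 1 / (K : ℝ)
  have hKpos : (0 : ℝ) < K := by exact_mod_cast hK
  have hq : 0 ≤ q := sub_nonneg.mpr ((div_le_one hKpos).mpr (by exact_mod_cast hK))
  have hunrolled := pow_mul_add_sum_le_of_mul_add_le_succ hq (x := x)
    (c := fun i => (OPT / K - ε₁ * ε₂) - ε₂ * (i / K))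
    (fun i hi => le_of_eq_of_le (by ring) (hrec i hi)) K le_rfl
  have hsplit : ∑ i ∈ range K, q ^ (K - i - 1) * ((OPT / K - ε₁ * ε₂) - ε₂ * (i / K))
      = (OPT / K - ε₁ * ε₂) * ∑ i ∈ range K, q ^ (K - i - 1)
        - ε₂ * ∑ i ∈ range K, q ^ (K - i - 1) * (i / K) := by
    simp only [mul_sum, ← sum_sub_distrib]
    exact sum_congr rfl fun i _ => by ring
  rw [hx0, mul_zero, zero_add, hsplit, sum_range_pow_reflect,
    geom_sum_one_sub_inv (by omega)] at hunrolled
  have hconst : (OPT / K - ε₁ * ε₂) * (K * (1 - q ^ K)) = (1 - q ^ K) * (OPT - K * ε₁ * ε₂) := by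
    field_simp
  rwa [hconst] at hunrolled

theorem cauim_recursion (K : ℕ) (hK : 1 ≤ K) (x : ℕ → ℝ)
    (OPT ε₁ ε₂ : ℝ) (hOPT : 0 ≤ OPT) (hε₁ : 0 ≤ ε₁) (hε₂ : 0 ≤ ε₂)
    (hx0 : x 0 = 0)
    (hrec : ∀ i < K, x (i + 1) ≥ (1 - 1 / (K : ℝ)) * x i + OPT / K - ε₁ * ε₂ - (i : ℝ) * ε₂ / K) :
    x K ≥ (1 - (1 - 1 / (K : ℝ)) ^ K) * (OPT - (K : ℝ) * ε₁ * ε₂)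
      - ε₂ * ∑ i ∈ Finset.range K, (1 - 1 / (K : ℝ)) ^ (K - i - 1) * ((i : ℝ) / K) :=
  cauim_recursion_general K hK x OPT ε₁ ε₂ hx0 hrec
end

section
/- Let K ≥ 1 and suppose reals x_0 = 0, x_1, …, x_K satisfy x_{i+1} ≥ ((1-γ)/(1+γ))·((1 - 1/K)·x_i + OPT'/K) for 0 ≤ i < K, where 0 < γ < 1 and OPT' ≥ 0. Then x_K ≥ (1 - ((1-γ)/(1+γ))^K·(1-1/K)^K) / ((1+γ)K/(1-γ) - K + 1) · OPT'. -/
/-!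
Writing `ρ = (1 - γ) / (1 + γ)`, the recursion reads `x (i + 1) ≥ a * x i + b` with
`a = ρ (1 - 1/K) ≥ 0` and `b = ρ OPT' / K`. Since `a ≥ 0` the inequality propagates, so
`x K ≥ b (1 + a + ⋯ + a^(K-1))`, and `(1 - a) (1 + a + ⋯ + a^(K-1)) = 1 - a^K` together with
`b (K/ρ - K + 1) = OPT' (1 - a)` turns this into the claimed bound.
-/

open Finset

theorem geom_sum_mul_add_pow_mul_le {R : Type*} [Semiring R] [PartialOrder R] [IsOrderedRing R]
    {a b : R} {x : ℕ → R} {n : ℕ} (ha : 0 ≤ a) (hx : ∀ i < n, a * x i + b ≤ x (i + 1)) :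
    (∑ j ∈ range n, a ^ j) * b + a ^ n * x 0 ≤ x n := by
  induction n with
  | zero => simp
  | succ n ih =>
    calc (∑ j ∈ range (n + 1), a ^ j) * b + a ^ (n + 1) * x 0
        = a * ((∑ j ∈ range n, a ^ j) * b + a ^ n * x 0) + b := by
          rw [geom_sum_succ, pow_succ', add_mul, one_mul, mul_add, mul_assoc, mul_assoc,
            add_right_comm]
      _ ≤ a * x n + b := by
          gcongr
          exact ih fun i hi => hx i (hi.trans n.lt_succ_self)
      _ ≤ x (n + 1) := hx n n.lt_succ_self

theorem noisy_greedy_recursion_general (K : ℕ) (γ OPT' : ℝ)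
    (hγ0 : 0 < γ) (hγ1 : γ < 1)
    (x : ℕ → ℝ) (hx0 : x 0 = 0)
    (hrec : ∀ i < K,
      x (i + 1) ≥ ((1 - γ) / (1 + γ)) * ((1 - 1 / (K : ℝ)) * x i + OPT' / K)) :
    x K ≥ (1 - ((1 - γ) / (1 + γ)) ^ K * (1 - 1 / (K : ℝ)) ^ K)
      / ((1 + γ) * (K : ℝ) / (1 - γ) - (K : ℝ) + 1) * OPT' := by
  obtain rfl | hK := Nat.eq_zero_or_pos K
  · simp [hx0]
  set ρ := (1 - γ) / (1 + γ)
  set a := ρ * (1 - 1 / (K : ℝ))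
  set b := ρ * (OPT' / K)
  set D := (1 + γ) * (K : ℝ) / (1 - γ) - K + 1
  have ha : 0 ≤ a := by
    have : 1 / (K : ℝ) ≤ 1 := by simpa only [one_div] using Nat.cast_inv_le_one K
    have : 0 < ρ := by apply div_pos <;> linarith
    positivity
  have hD : 0 < D := by
    have : (K : ℝ) ≤ (1 + γ) * K / (1 - γ) := by
      rw [le_div_iff₀ (by linarith)]; nlinarith
    linarith
  have hbD : b * D = OPT' * (1 - a) := by
    have : (1 - γ) ≠ 0 := by linarith
    have : (1 + γ) ≠ 0 := by linarith
    simp only [a, b, D, ρ]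
    field_simp
    ring
  have hx := geom_sum_mul_add_pow_mul_le (b := b) ha fun i hi => (hrec i hi).trans_eq' (by ring)
  rw [hx0, mul_zero, add_zero] at hx
  calc (1 - ρ ^ K * (1 - 1 / (K : ℝ)) ^ K) / D * OPT'
      = (∑ j ∈ range K, a ^ j) * (1 - a) * OPT' / D := by
        rw [geom_sum_mul_neg, mul_pow, div_mul_eq_mul_div]
    _ = (∑ j ∈ range K, a ^ j) * b := by
        rw [mul_assoc, mul_comm (1 - a), ← hbD, div_eq_iff hD.ne']; ring
    _ ≤ x K := hx

theorem noisy_greedy_recursion (K : ℕ) (hK : 1 ≤ K) (γ OPT' : ℝ)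
    (hγ0 : 0 < γ) (hγ1 : γ < 1) (hOPT : 0 ≤ OPT')
    (x : ℕ → ℝ) (hx0 : x 0 = 0)
    (hrec : ∀ i < K,
      x (i + 1) ≥ ((1 - γ) / (1 + γ)) * ((1 - 1 / (K : ℝ)) * x i + OPT' / K)) :
    x K ≥ (1 - ((1 - γ) / (1 + γ)) ^ K * (1 - 1 / (K : ℝ)) ^ K)
      / ((1 + γ) * (K : ℝ) / (1 - γ) - (K : ℝ) + 1) * OPT' :=
  noisy_greedy_recursion_general K γ OPT' hγ0 hγ1 x hx0 hrec
end
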